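/- Flipping a simple point preserves both foreground and background component counts: Let X ⊂ ℤ² be finite and x ∈ X with T₄(x,X) = 1 and T₈(x, ℤ²\X) = 1. Then the number of 4-connected components of X\{x} equals that of X, and the number of 8-connected components of (ℤ²\X) ∪ {x} intersected with any fixed finite window containing N₈(x) equals that of ℤ²\X in the same window. -/
import Mathlib


/-- 4-adjacency on the 2D grid `ℤ²`. -/
def adj4 (p q : ℤ × ℤ) : Prop := (p.1 - q.1).natAbs + (p.2 - q.2).natAbs = 1

/-- 8-adjacency on the 2D grid `ℤ²`. -/
def adj8 (p q : ℤ × ℤ) : Prop :=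
  p ≠ q ∧ (p.1 - q.1).natAbs ≤ 1 ∧ (p.2 - q.2).natAbs ≤ 1

/-- Reachability within a set `X` by a chain of `adj`-adjacent points of `X`. -/
def reachIn (adj : ℤ × ℤ → ℤ × ℤ → Prop) (X : Set (ℤ × ℤ)) (p q : ℤ × ℤ) : Prop :=
  Relation.ReflTransGen (fun a b => adj a b ∧ a ∈ X ∧ b ∈ X) p q

/-- `X` is `adj`-connected: any two of its points are joined by a chain in `X`. -/
def IsConnSet (adj : ℤ × ℤ → ℤ × ℤ → Prop) (X : Set (ℤ × ℤ)) : Prop :=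
  ∀ p ∈ X, ∀ q ∈ X, reachIn adj X p q

/-- The set of `adj`-connected components of `X`. -/
def comps (adj : ℤ × ℤ → ℤ × ℤ → Prop) (X : Set (ℤ × ℤ)) : Set (Set (ℤ × ℤ)) :=
  {C | ∃ p ∈ X, C = {q | reachIn adj X p q}}

/-- The number of `adj`-connected components of `X`. -/
noncomputable def ncc (adj : ℤ × ℤ → ℤ × ℤ → Prop) (X : Set (ℤ × ℤ)) : ℕ :=
  (comps adj X).ncard

/-- Punctured 4-neighborhood `N₄*(x)`. -/
def N4star (x : ℤ × ℤ) : Set (ℤ × ℤ) := {y | adj4 x y}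

/-- 4-neighborhood `N₄(x)` (including `x`). -/
def N4 (x : ℤ × ℤ) : Set (ℤ × ℤ) := insert x (N4star x)

/-- Punctured 8-neighborhood `N₈*(x)`. -/
def N8star (x : ℤ × ℤ) : Set (ℤ × ℤ) := {y | adj8 x y}

/-- 8-neighborhood `N₈(x)` (including `x`). -/
def N8 (x : ℤ × ℤ) : Set (ℤ × ℤ) := insert x (N8star x)

/-- Geodesic neighborhood `N₄²(x,X) = ⋃ {N₄(y) ∩ N₈*(x) ∩ X : y ∈ N₄*(x) ∩ X}`. -/
def geo4 (x : ℤ × ℤ) (X : Set (ℤ × ℤ)) : Set (ℤ × ℤ) :=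
  ⋃ y ∈ N4star x ∩ X, (N4 y ∩ N8star x ∩ X)

/-- Geodesic neighborhood `N₈¹(x,X) = N₈*(x) ∩ X`. -/
def geo8 (x : ℤ × ℤ) (X : Set (ℤ × ℤ)) : Set (ℤ × ℤ) := N8star x ∩ X

/-- Topology number `T₄(x,X)`, computed with respect to `X \ {x}`. -/
noncomputable def T4 (x : ℤ × ℤ) (X : Set (ℤ × ℤ)) : ℕ := ncc adj4 (geo4 x (X \ {x}))

/-- Topology number `T₈(x,X)`. -/
noncomputable def T8 (x : ℤ × ℤ) (X : Set (ℤ × ℤ)) : ℕ := ncc adj8 (geo8 x (X \ {x}))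


section Aux

variable {adj : ℤ × ℤ → ℤ × ℤ → Prop}

lemma reach_symm (hsym : ∀ a b, adj a b → adj b a) {X : Set (ℤ × ℤ)} {p q : ℤ × ℤ}
    (h : reachIn adj X p q) : reachIn adj X q p := by
  induction h with
  | refl => exact Relation.ReflTransGen.refl
  | tail _ hbc ih => exact Relation.ReflTransGen.head ⟨hsym _ _ hbc.1, hbc.2.2, hbc.2.1⟩ ih

lemma reach_mono {X Y : Set (ℤ × ℤ)} (hXY : X ⊆ Y) {p q : ℤ × ℤ}
    (h : reachIn adj X p q) : reachIn adj Y p q := by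
  induction h with
  | refl => exact Relation.ReflTransGen.refl
  | tail _ hbc ih => exact ih.tail ⟨hbc.1, hXY hbc.2.1, hXY hbc.2.2⟩

lemma reach_ne {X : Set (ℤ × ℤ)} {p q : ℤ × ℤ} (h : reachIn adj X p q) :
    q = p ∨ q ∈ X := by
  induction h with
  | refl => exact Or.inl rfl
  | tail _ hbc _ => exact Or.inr hbc.2.2

lemma conn_of_ncc_one {G : Set (ℤ × ℤ)} (h : ncc adj G = 1) :
    G.Nonempty ∧ ∀ a ∈ G, ∀ b ∈ G, reachIn adj G a b := by
  obtain ⟨C, hC⟩ := Set.ncard_eq_one.mp h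
  have hCmem : C ∈ comps adj G := by rw [hC]; exact Set.mem_singleton C
  obtain ⟨p, hp, _⟩ := hCmem
  refine ⟨⟨p, hp⟩, ?_⟩
  intro a ha b hb
  have h1 : {q | reachIn adj G a q} ∈ comps adj G := ⟨a, ha, rfl⟩
  have h2 : {q | reachIn adj G b q} ∈ comps adj G := ⟨b, hb, rfl⟩
  rw [hC, Set.mem_singleton_iff] at h1 h2
  have hb' : b ∈ {q | reachIn adj G b q} := Relation.ReflTransGen.refl
  rw [h2, ← h1] at hb'
  exact hb'

lemma reroute (hsym : ∀ a b, adj a b → adj b a) {S : Set (ℤ × ℤ)} {x : ℤ × ℤ}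
    (hxx : ¬ adj x x)
    (hloc : ∀ a b, adj x a → a ∈ S \ {x} → adj x b → b ∈ S \ {x} →
      reachIn adj (S \ {x}) a b)
    {p : ℤ × ℤ} (hp : p ∈ S \ {x}) {q : ℤ × ℤ} (h : reachIn adj S p q) :
    (q ≠ x → reachIn adj (S \ {x}) p q) ∧
    (q = x → ∃ a, adj x a ∧ a ∈ S \ {x} ∧ reachIn adj (S \ {x}) p a) := by
  induction h with
  | refl =>
    refine ⟨fun _ => Relation.ReflTransGen.refl, fun hq => absurd hq ?_⟩
    simpa using hp.2
  | @tail b c hpb hbc ih =>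
    constructor
    · intro hcx
      by_cases hbx : b = x
      · obtain ⟨a, hxa, haS, hpa⟩ := ih.2 hbx
        have hxc : adj x c := by rw [← hbx]; exact hbc.1
        exact hpa.trans (hloc a c hxa haS hxc ⟨hbc.2.2, by simpa using hcx⟩)
      · exact (ih.1 hbx).tail ⟨hbc.1, ⟨hbc.2.1, by simpa using hbx⟩, ⟨hbc.2.2, by simpa using hcx⟩⟩
    · intro hcx
      by_cases hbx : b = x
      · exact absurd hbc.1 (by rw [hbx, hcx]; exact hxx)
      · refine ⟨b, hsym b x ?_, ⟨hbc.2.1, by simpa using hbx⟩, ih.1 hbx⟩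
        rw [← hcx]; exact hbc.1

lemma ncc_remove (hsym : ∀ a b, adj a b → adj b a) (S : Set (ℤ × ℤ)) (x : ℤ × ℤ)
    (hx : x ∈ S) (hxx : ¬ adj x x)
    (hne : ∃ a, adj x a ∧ a ∈ S \ {x})
    (hloc : ∀ a b, adj x a → a ∈ S \ {x} → adj x b → b ∈ S \ {x} →
      reachIn adj (S \ {x}) a b) :
    ncc adj (S \ {x}) = ncc adj S := by
  have comp_eq : ∀ p q : ℤ × ℤ, reachIn adj S p q →
      {r | reachIn adj S p r} = {r | reachIn adj S q r} := by
    intro p q h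
    ext r
    simp only [Set.mem_setOf_eq]
    exact ⟨fun h2 => (reach_symm hsym h).trans h2, fun h2 => h.trans h2⟩
  have norm : ∀ C ∈ comps adj S, ∃ p ∈ S \ {x}, C = {q | reachIn adj S p q} := by
    rintro C ⟨p, hp, rfl⟩
    by_cases hpx : p = x
    · subst hpx
      obtain ⟨a, hxa, haS⟩ := hne
      exact ⟨a, haS, comp_eq _ _ (Relation.ReflTransGen.single ⟨hxa, hx, haS.1⟩)⟩
    · exact ⟨p, ⟨hp, by simpa using hpx⟩, rfl⟩
  have fwd : ∀ p ∈ S \ {x},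
      {q | reachIn adj (S \ {x}) p q} = {q | reachIn adj S p q} \ {x} := by
    intro p hp
    ext q
    simp only [Set.mem_setOf_eq, Set.mem_diff, Set.mem_singleton_iff]
    constructor
    · intro h
      refine ⟨reach_mono Set.diff_subset h, ?_⟩
      rcases reach_ne h with rfl | hq
      · simpa using hp.2
      · simpa using hq.2
    · rintro ⟨h, hq⟩
      exact (reroute hsym hxx hloc hp h).1 hq
  have himg : comps adj (S \ {x}) = (fun C => C \ {x}) '' comps adj S := by
    apply Set.Subset.antisymm
    · rintro D ⟨p, hp, rfl⟩
      exact ⟨{q | reachIn adj S p q}, ⟨p, hp.1, rfl⟩, (fwd p hp).symm⟩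
    · rintro D ⟨C, hC, rfl⟩
      obtain ⟨p, hp, rfl⟩ := norm C hC
      exact ⟨p, hp, (fwd p hp).symm⟩
  have hinj : Set.InjOn (fun C => C \ {x}) (comps adj S) := by
    intro C1 h1 C2 h2 heq
    obtain ⟨p1, hp1, rfl⟩ := norm C1 h1
    obtain ⟨p2, hp2, rfl⟩ := norm C2 h2
    have hp1m : p1 ∈ {q | reachIn adj S p1 q} \ {x} :=
      ⟨Relation.ReflTransGen.refl, by simpa using hp1.2⟩
    rw [show ({q | reachIn adj S p1 q} \ {x} : Set (ℤ × ℤ))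
        = {q | reachIn adj S p2 q} \ {x} from heq] at hp1m
    exact (comp_eq _ _ hp1m.1).symm
  rw [ncc, himg, Set.ncard_image_of_injOn hinj]
  rfl

lemma adj4_symm : ∀ a b : ℤ × ℤ, adj4 a b → adj4 b a := by
  intro a b h
  unfold adj4 at *
  omega

lemma adj8_symm : ∀ a b : ℤ × ℤ, adj8 a b → adj8 b a := by
  intro a b h
  obtain ⟨h1, h2, h3⟩ := h
  exact ⟨h1.symm, by omega, by omega⟩

lemma adj8_of_adj4 {a b : ℤ × ℤ} (h : adj4 a b) : adj8 a b := by
  unfold adj4 at h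
  refine ⟨?_, by omega, by omega⟩
  intro he
  subst he
  simp at h

end Aux

/-- Flipping a simple point preserves both foreground and background component counts:
if `x ∈ X` satisfies `T₄(x,X) = 1` and `T₈(x, Xᶜ) = 1` (so `x` is simple), then
`X \ {x}` has the same number of 4-connected components as `X`, and within any finite
window `W` containing `N₈(x)`, the background `Xᶜ ∪ {x}` has the same number of
8-connected components as `Xᶜ`. -/
theorem stmt_13 (X : Set (ℤ × ℤ)) (hfin : X.Finite) (x : ℤ × ℤ) (hx : x ∈ X)
    (hT4 : ncc adj4 (geo4 x (X \ {x})) = 1)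
    (hT8 : ncc adj8 (geo8 x Xᶜ) = 1) :
    ncc adj4 (X \ {x}) = ncc adj4 X ∧
    ∀ W : Set (ℤ × ℤ), W.Finite → N8 x ⊆ W →
      ncc adj8 ((Xᶜ ∪ {x}) ∩ W) = ncc adj8 (Xᶜ ∩ W) := by
  constructor
  · -- foreground
    obtain ⟨hge, hconn⟩ := conn_of_ncc_one hT4
    have hgeo_sub : geo4 x (X \ {x}) ⊆ X \ {x} := by
      intro z hz
      obtain ⟨y, hy, hz2⟩ := Set.mem_iUnion₂.mp hz
      exact hz2.2
    have hmem_geo : ∀ a, adj4 x a → a ∈ X \ {x} → a ∈ geo4 x (X \ {x}) := by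
      intro a hxa haX
      exact Set.mem_iUnion₂.mpr ⟨a, ⟨hxa, haX⟩, ⟨Set.mem_insert a _, adj8_of_adj4 hxa⟩, haX⟩
    have hne : ∃ a, adj4 x a ∧ a ∈ X \ {x} := by
      obtain ⟨z, hz⟩ := hge
      obtain ⟨y, hy, -⟩ := Set.mem_iUnion₂.mp hz
      exact ⟨y, hy.1, hy.2⟩
    refine ncc_remove adj4_symm X x hx (by simp [adj4]) hne ?_
    intro a b hxa haX hxb hbX
    exact reach_mono hgeo_sub (hconn a (hmem_geo a hxa haX) b (hmem_geo b hxb hbX))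
  · intro W _ hW
    obtain ⟨hge, hconn⟩ := conn_of_ncc_one hT8
    set S : Set (ℤ × ℤ) := (Xᶜ ∪ {x}) ∩ W with hS
    have hdiff : S \ {x} = Xᶜ ∩ W := by
      ext q
      simp only [hS, Set.mem_diff, Set.mem_inter_iff, Set.mem_union,
        Set.mem_singleton_iff, Set.mem_compl_iff]
      constructor
      · rintro ⟨⟨hq | rfl, hqW⟩, hqx⟩
        · exact ⟨hq, hqW⟩
        · exact absurd rfl hqx
      · rintro ⟨hq, hqW⟩
        exact ⟨⟨Or.inl hq, hqW⟩, fun he => hq (he ▸ hx)⟩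
    have hgeo_sub : geo8 x Xᶜ ⊆ S \ {x} := by
      rw [hdiff]
      intro z hz
      exact ⟨hz.2, hW (Set.mem_insert_of_mem x hz.1)⟩
    have hxS : x ∈ S := ⟨Or.inr rfl, hW (Set.mem_insert x _)⟩
    have hne : ∃ a, adj8 x a ∧ a ∈ S \ {x} := by
      obtain ⟨z, hz⟩ := hge
      exact ⟨z, hz.1, hgeo_sub hz⟩
    have key := ncc_remove adj8_symm S x hxS (by simp [adj8]) hne ?_
    · rw [hdiff] at key
      exact key.symm
    · intro a b hxa haS hxb hbS
      have ha' : a ∈ geo8 x Xᶜ := ⟨hxa, by rw [hdiff] at haS; exact haS.1⟩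
      have hb' : b ∈ geo8 x Xᶜ := ⟨hxb, by rw [hdiff] at hbS; exact hbS.1⟩
      exact reach_mono hgeo_sub (hconn a ha' b hb')
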